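/- Soundness of the executable byte read: for every pointer p and every configuration σ, either read_b p σ ∋ UB, or read_b p σ ∋ read_b^run p σ; i.e., the deterministic executable implementation's result from σ is an allowed behavior of the read specification from σ unless the specification allows UB. -/
import Mathlib


/-! Executable memory model (instantiated at the concrete address type ℤ)
and its nondeterministic specification. -/

/-- Pointers: an address tagged with a provenance (`Option ℕ`, `none` is the wildcard). -/
structure PtrZ where
  a : ℤ
  pr : Option ℕ
deriving DecidableEq

/-- Memory configurations: a finite memory map, heap block map, frame stack, and
the set of used provenances. -/
structure ConfZ (SByte : Type) where
  mem : Finmap fun _ : ℤ => SByte × Option ℕ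
  heap : Finmap fun _ : ℤ => List PtrZ
  stack : List (List PtrZ)
  used : Finset ℕ

/-- Possible outcomes of a memory operation. -/
inductive ErrUbOom (A : Type) where
  | UB
  | OOM
  | FAIL
  | ok (a : A)

/-- The (nondeterministic, propositional) specification monad. -/
abbrev MemPropT (SByte X : Type) : Type :=
  ConfZ SByte → Set (ErrUbOom (ConfZ SByte × X))

/-- The (deterministic) executable monad. -/
abbrev MemExec (SByte X : Type) : Type :=
  ConfZ SByte → ErrUbOom (ConfZ SByte × X)

/-- `σ.mem[p] ≐ b`: address `p.a` maps to byte `b` with provenance `p.pr`. -/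
def readByteAt {SByte : Type} (σ : ConfZ SByte) (p : PtrZ) (b : SByte) : Prop :=
  σ.mem.lookup p.a = some (b, p.pr)

/-- A pointer is accessible in memory. -/
def accessible {SByte : Type} (σ : ConfZ SByte) (p : PtrZ) : Prop :=
  ∃ b, readByteAt σ p b

/-- Boolean accessibility check (used by the executable implementations). -/
def accessibleB {SByte : Type} (σ : ConfZ SByte) (p : PtrZ) : Bool :=
  match σ.mem.lookup p.a with
  | some (_, pr) => decide (pr = p.pr)
  | none => false

/-- The two memories agree on content and provenance at all addresses except those
of the pointers in `ps`. -/
def memEqExcept {SByte : Type} (σ1 σ2 : ConfZ SByte) (ps : List PtrZ) : Prop :=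
  ∀ (p' : PtrZ) (b : SByte),
    (∀ p ∈ ps, p'.a ≠ p.a) → (readByteAt σ1 p' b ↔ readByteAt σ2 p' b)


/-- Specification of reading a byte: `ok (σ, b)` on a successful provenance-checked
lookup (leaving the configuration unchanged), `UB` when the pointer is not accessible
(and `OOM` is always allowed). -/
def readSpec {SByte : Type} (p : PtrZ) : MemPropT SByte SByte :=
  fun σ =>
    { beh | beh = .OOM
          ∨ (¬ accessible σ p ∧ beh = .UB)
          ∨ ∃ b, readByteAt σ p b ∧ beh = .ok (σ, b) }

/-- Executable byte read: a deterministic function mirroring the specification. -/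
def readRun {SByte : Type} (p : PtrZ) : MemExec SByte SByte :=
  fun σ =>
    match σ.mem.lookup p.a with
    | some (b, pr) => if pr = p.pr then .ok (σ, b) else .UB
    | none => .UB

/-- Soundness of the executable byte read: for every pointer `p` and configuration `σ`,
either `read_b p σ ∋ UB`, or `read_b p σ ∋ read_b^run p σ`. -/
theorem readRun_sound {SByte : Type} (p : PtrZ) (σ : ConfZ SByte) :
    ErrUbOom.UB ∈ readSpec p σ ∨ readRun p σ ∈ readSpec p σ := by
  unfold readRun readSpec
  rcases h : σ.mem.lookup p.a with _ | ⟨b, pr⟩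
  · left
    refine Or.inr (Or.inl ⟨fun ⟨b, hb⟩ => ?_, rfl⟩)
    simp [readByteAt, h] at hb
  · by_cases hpr : pr = p.pr
    · right
      simp only [hpr, if_pos rfl]
      exact Or.inr (Or.inr ⟨b, by simp [readByteAt, h, hpr], rfl⟩)
    · left
      refine Or.inr (Or.inl ⟨fun ⟨b', hb⟩ => ?_, rfl⟩)
      simp [readByteAt, h] at hb
      exact hpr hb.2
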